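/- arXiv:2303.02409 — 3 statements merged into one kernel-verified Lean document; each statement's English description precedes it below -/
import Mathlib

section
/- For every integer k with 0 < k < p, the element v_k := ζ^k + ζ^{−k} − (−1)^k·2 lies in 𝓞 and generates the same ideal of 𝓞 as γ + 2; i.e., (v_k) = (γ + 2) as ideals of 𝓞. -/
/-!
Put `η := -ζ`, a primitive `p`-th root of unity. Then
`v_k = ζ^{-k} (η^k - 1)^2`, and `η^k - 1` is associated to `η - 1` among the algebraic integers
(the quotients are geometric sums in `η`), so `v_k` is associated to `v_1 = γ + 2` there. Both lie in
`ℚ(γ)` (`ζ^k + ζ^{-k}` is a Dickson polynomial in `γ`), so the quotients lie in `ℚ(γ)` as well and the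
association descends to its ring of integers.
-/

open IntermediateField

theorem IsPrimitiveRoot.neg_of_odd {R : Type*} [CommRing R] [IsDomain R] {ζ : R} {n : ℕ}
    (hζ : IsPrimitiveRoot ζ (2 * n)) (hn : Odd n) : IsPrimitiveRoot (-ζ) n := by
  obtain ⟨m, rfl⟩ := hn
  have hsq : IsPrimitiveRoot (ζ ^ 2) (2 * m + 1) := by
    simpa using hζ.pow_of_dvd two_ne_zero (dvd_mul_right 2 _)
  have hneg : ζ ^ (2 * m + 1) = -1 := by
    refine IsPrimitiveRoot.eq_neg_one_of_two_right ?_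
    simpa using hζ.pow_of_dvd (by omega) (dvd_mul_left (2 * m + 1) 2)
  have hneg_eq : -ζ = (ζ ^ 2) ^ (m + 1) := by
    rw [← pow_mul, show 2 * (m + 1) = 2 * m + 1 + 1 by ring, pow_succ, hneg, neg_one_mul]
  rw [hneg_eq]
  exact hsq.pow_of_coprime _ (by simp [two_mul, add_assoc])

theorem pow_add_inv_pow_mem_adjoin {F K : Type*} [Field F] [Field K] [Algebra F K] {ζ : K}
    (hζ : ζ ≠ 0) (k : ℕ) : ζ ^ k + ζ⁻¹ ^ k ∈ F⟮ζ + ζ⁻¹⟯ := by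
  rw [← Polynomial.dickson_one_one_eval_add_inv ζ ζ⁻¹ (mul_inv_cancel₀ hζ),
    ← map_one (algebraMap F K), ← Polynomial.map_dickson, Polynomial.eval_map_algebraMap]
  exact algebra_adjoin_le_adjoin F _ (Polynomial.aeval_mem_adjoin_singleton F _)

theorem pow_add_inv_pow_sub_eq {K : Type*} [Field K] {ζ : K} (hζ : ζ ≠ 0) (k : ℕ) :
    ζ ^ k + ζ⁻¹ ^ k - (-1) ^ k * 2 = ζ⁻¹ ^ k * ((-ζ) ^ k - 1) ^ 2 := by
  have h1 : ζ⁻¹ ^ k * ζ ^ k = 1 := by rw [← mul_pow, inv_mul_cancel₀ hζ, one_pow]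
  have h2 : ((-1 : K) ^ k) ^ 2 = 1 := by rw [← pow_mul, mul_comm, pow_mul]; simp
  rw [neg_pow]
  linear_combination (2 * (-1) ^ k - ζ ^ k * ((-1) ^ k) ^ 2) * h1 - ζ ^ k * h2

theorem exists_associated_pow_add_inv_pow_sub {K : Type*} [Field K] {ζ : K} {n k : ℕ}
    (hζ : IsPrimitiveRoot ζ (2 * n)) (hn : Odd n) (hk : k.Coprime n) :
    ∃ a b : integralClosure ℤ K, (a : K) = ζ ^ k + ζ⁻¹ ^ k - (-1) ^ k * 2 ∧
      (b : K) = ζ + ζ⁻¹ + 2 ∧ Associated a b := by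
  have h2n : 0 < 2 * n := by have := hn.pos; omega
  have hζ0 : ζ ≠ 0 := hζ.ne_zero h2n.ne'
  let z : integralClosure ℤ K := ⟨ζ, hζ.isIntegral h2n⟩
  let zinv : integralClosure ℤ K := ⟨ζ⁻¹, hζ.inv.isIntegral h2n⟩
  have hzinv : IsUnit zinv := IsUnit.of_mul_eq_one z (Subtype.ext (inv_mul_cancel₀ hζ0))
  let w (j : ℕ) : integralClosure ℤ K := zinv ^ j * ((-z) ^ j - 1) ^ 2
  have hw (j : ℕ) : (w j : K) = ζ ^ j + ζ⁻¹ ^ j - (-1) ^ j * 2 := by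
    rw [pow_add_inv_pow_sub_eq hζ0]; rfl
  have hη : IsPrimitiveRoot (-z) n :=
    (hζ.of_map_of_injective (f := (integralClosure ℤ K).val) Subtype.val_injective).neg_of_odd hn
  refine ⟨w k, w 1, hw k, by rw [hw 1]; ring, ?_⟩
  exact (associated_unit_mul_left _ _ (hzinv.pow k)).trans <|
    (hη.associated_sub_one_pow_sub_one_of_coprime hk).symm.pow_pow.trans
      (by simpa [w] using (associated_unit_mul_left _ _ hzinv).symm)

namespace integralClosure

variable {R F K : Type*} [CommRing R] [Field F] [Field K] [Algebra R F] [Algebra R K]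
  [Algebra F K] [IsScalarTower R F K]

theorem dvd_of_dvd_extension {a b : integralClosure R F} {a' b' : integralClosure R K}
    (ha : (a' : K) = algebraMap F K a) (hb : (b' : K) = algebraMap F K b) (h : a' ∣ b') :
    a ∣ b := by
  obtain ⟨c, hc⟩ := h
  have hc' : algebraMap F K b = algebraMap F K a * c := by
    rw [← ha, ← hb, hc]; rfl
  by_cases ha0 : (a : F) = 0
  · rw [ha0, map_zero, zero_mul, map_eq_zero] at hc'
    exact ⟨0, Subtype.ext (by simp [hc'])⟩
  refine ⟨⟨b / a, ?_⟩, Subtype.ext ?_⟩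
  · rw [mem_integralClosure_iff, ← isIntegral_algebraMap_iff (algebraMap F K).injective,
      map_div₀, hc', mul_div_cancel_left₀ _ ((map_ne_zero _).mpr ha0)]
    exact c.2
  · simp [mul_div_cancel₀ _ ha0]

theorem associated_of_associated_extension {a b : integralClosure R F}
    {a' b' : integralClosure R K} (ha : (a' : K) = algebraMap F K a)
    (hb : (b' : K) = algebraMap F K b) (h : Associated a' b') : Associated a b :=
  associated_of_dvd_dvd (dvd_of_dvd_extension ha hb h.dvd) (dvd_of_dvd_extension hb ha h.symm.dvd)

end integralClosure

/-- Let `p` be an odd prime, `ζ` a primitive `2p`-th root of unity (in a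
field of characteristic zero), `γ := ζ + ζ⁻¹` and let `𝓞` be the ring of integers of `ℚ(γ)`
(realized as the integral closure of `ℤ` in `ℚ⟮γ⟯`).  For every integer `k` with
`0 < k < p`, the element `v_k := ζ^k + ζ^{-k} - (-1)^k·2` lies in `𝓞` and generates the
same ideal of `𝓞` as `γ + 2`, i.e. `(v_k) = (γ + 2)` as ideals of `𝓞`. -/
theorem stmt2 {p : ℕ} (hp : p.Prime) (hodd : Odd p)
    {K : Type*} [Field K] [CharZero K]
    (ζ : K) (hζ : IsPrimitiveRoot ζ (2 * p))
    (x : ↥(integralClosure ℤ ↥(ℚ⟮ζ + ζ⁻¹⟯)))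
    (hx : ((x : ↥(ℚ⟮ζ + ζ⁻¹⟯)) : K) = (ζ + ζ⁻¹) + 2)
    (k : ℕ) (hk0 : 0 < k) (hkp : k < p) :
    ∃ v : ↥(integralClosure ℤ ↥(ℚ⟮ζ + ζ⁻¹⟯)),
      ((v : ↥(ℚ⟮ζ + ζ⁻¹⟯)) : K) = ζ ^ k + ζ⁻¹ ^ k - (-1) ^ k * 2 ∧
      Ideal.span {v} = Ideal.span {x} := by
  have hζ0 : ζ ≠ 0 := hζ.ne_zero (by have := hp.pos; omega)
  obtain ⟨a, b, ha, hb, hab⟩ := exists_associated_pow_add_inv_pow_sub hζ hodd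
    (Nat.coprime_of_lt_prime hk0.ne' hkp hp).symm
  have hmem : ζ ^ k + ζ⁻¹ ^ k - (-1) ^ k * 2 ∈ ℚ⟮ζ + ζ⁻¹⟯ :=
    sub_mem (pow_add_inv_pow_mem_adjoin hζ0 k)
      (by simpa using IntermediateField.algebraMap_mem ℚ⟮ζ + ζ⁻¹⟯ ((-1) ^ k * 2 : ℚ))
  have hint : IsIntegral ℤ (ζ ^ k + ζ⁻¹ ^ k - (-1) ^ k * 2) := ha ▸ a.2
  refine ⟨⟨⟨_, hmem⟩, (isIntegral_algebraMap_iff (algebraMap ℚ⟮ζ + ζ⁻¹⟯ K).injective).mp hint⟩,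
    rfl, ?_⟩
  rw [Ideal.span_singleton_eq_span_singleton]
  exact integralClosure.associated_of_associated_extension ha (hb.trans hx.symm) hab
end

section
/- Let z ∈ Z, let u, w ∈ W, let I = (i₁,…,i_l) be a reduced word of w⁻¹ and I* := (i_l,…,i₁) (a reduced word of w). Then Σ_{y∈W} (Y_I • [u])(y) · z(y) / y(x_Π) = (Y_{I*} • z)(u). Equivalently, π • (ζ(u)_I · z) = (Y_{I*} • z)(u) · 𝟏, where ζ(u)_I := δ_u ⊙ (Y_I • [e]) = Y_I • [u] is the twisted Schubert class and (π • z')(v) := Σ_{y∈W} z'(y)/y(x_Π) is the push-forward action. -/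
open scoped Classical

noncomputable section

namespace RootCtx

open MvPolynomial

/-- `S = Sym(V) = ℚ[α_i : i ∈ ι]`, the symmetric algebra of the span `V` of the root
system, written in the basis of simple roots (the variable `X i` *is* the simple root
`α_i`). -/
abbrev S (ι : Type) : Type := MvPolynomial ι ℚ

/-- `Q`, the fraction field of `S`. -/
abbrev Q (ι : Type) : Type := FractionRing (S ι)

variable {ι : Type} [Fintype ι] {W : Type} [Group W] [Fintype W]

/-- `x_Π := ∏_{α ∈ Φ⁺} (-α)`. -/
def xPi (P : Finset (S ι)) : S ι := ∏ a ∈ P, (-a)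

/-- The length of `w ∈ W`, as the number of positive roots sent to negative roots. -/
def len (φ : W →* (S ι ≃ₐ[ℚ] S ι)) (P : Finset (S ι)) (w : W) : ℕ :=
  Set.ncard {a : S ι | a ∈ P ∧ -(φ w a) ∈ P}

/-- `l` is a reduced word of `w`. -/
def IsRed (φ : W →* (S ι ≃ₐ[ℚ] S ι)) (P : Finset (S ι)) (sr : ι → W)
    (l : List ι) (w : W) : Prop :=
  (l.map sr).prod = w ∧ l.length = len φ P w

/-- The Hecke (push-pull) operator `Y_i`: `(Y_i • z)(v) = (z(v s_i) - z(v)) / v(α_i)`. -/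
def hecke (φ : W →* (S ι ≃ₐ[ℚ] S ι)) (sr : ι → W) (i : ι) (z : W → Q ι) : W → Q ι :=
  fun v => (z (v * sr i) - z v) / algebraMap (S ι) (Q ι) (φ v (X i))

/-- `Y_I • z = Y_{i₁} • (⋯ • (Y_{i_l} • z))` for `I = (i₁, …, i_l)`. -/
def heckeWord (φ : W →* (S ι ≃ₐ[ℚ] S ι)) (sr : ι → W) (l : List ι) (z : W → Q ι) :
    W → Q ι :=
  l.foldr (hecke φ sr) z

/-- The class `[u]` of the fixed point `u`, with `[u](u) = u(x_Π)` and all other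
components `0`. -/
def fixedPt (φ : W →* (S ι ≃ₐ[ℚ] S ι)) (P : Finset (S ι)) (u : W) : W → Q ι :=
  fun v => if v = u then algebraMap (S ι) (Q ι) (φ u (xPi P)) else 0

/-- The divided difference operator `X_i(f) = (f - s_i(f))/α_i` on the fraction field. -/
def dd (ψ : W →* RingAut (Q ι)) (sr : ι → W) (i : ι) (f : Q ι) : Q ι :=
  (f - ψ (sr i) f) / algebraMap (S ι) (Q ι) (X i)

/-- `X_I = X_{i₁} ∘ ⋯ ∘ X_{i_l}` for `I = (i₁, …, i_l)`. -/
def ddWord (ψ : W →* RingAut (Q ι)) (sr : ι → W) (l : List ι) (f : Q ι) : Q ι :=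
  l.foldr (dd ψ sr) f

/-- Membership in the structure algebra `Z`: for every positive root `a` (with associated
reflection `ref a`) and every `w`, `a` divides `z(s_a w) - z(w)` in `S`. -/
def inZ (ref : S ι → W) (P : Finset (S ι)) (z : W → S ι) : Prop :=
  ∀ a ∈ P, ∀ w : W, a ∣ (z (ref a * w) - z w)

/-- All the axioms of the setup: `Φ` is a reduced crystallographic finite root system
spanning `V` with simple roots the `X i` and positive roots `P`; `W` (a finite group) is
its Weyl group, acting faithfully on `S = Sym(V)` via `φ` (extended to the fraction field
`Q` via `ψ`), generated by the simple reflections `sr i`; `ref a` is the reflection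
attached to the (positive) root `a`. -/
structure IsRootCtx (φ : W →* (S ι ≃ₐ[ℚ] S ι)) (ψ : W →* RingAut (Q ι))
    (sr : ι → W) (ref : S ι → W) (P : Finset (S ι)) : Prop where
  /-- the action of `W` on `S` is faithful -/
  faithful : Function.Injective φ
  /-- the action on `Q` extends the action on `S` -/
  compat : ∀ (w : W) (f : S ι),
    ψ w (algebraMap (S ι) (Q ι) f) = algebraMap (S ι) (Q ι) (φ w f)
  /-- `W` is generated by the simple reflections -/
  gen : Subgroup.closure (Set.range sr) = ⊤
  /-- `0` is not a root -/
  zero_not_mem : (0 : S ι) ∉ P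
  /-- the simple roots are positive roots -/
  simple_mem : ∀ i, X i ∈ P
  /-- every positive root is a non-negative integral combination of the simple roots -/
  pos_nat : ∀ a ∈ P, ∃ c : ι → ℕ, a = ∑ i, (c i : ℚ) • X i
  /-- crystallographic condition: `s_i(α_j) = α_j - ⟨α_j, α_i^∨⟩ α_i` with integral
  Cartan coefficients -/
  cartan : ∀ i j, ∃ n : ℤ, φ (sr i) (X j) = X j - (n : ℚ) • X i
  /-- `s_i(α_i) = -α_i` -/
  simple_neg : ∀ i, φ (sr i) (X i) = - X i
  /-- `W` permutes the set `Φ = Φ⁺ ∪ (-Φ⁺)` of all roots -/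
  perm : ∀ (w : W), ∀ a ∈ P, φ w a ∈ P ∨ -(φ w a) ∈ P
  /-- `s_i` permutes `Φ⁺ \ {α_i}` -/
  simple_perm : ∀ i, ∀ a ∈ P, a ≠ X i → φ (sr i) a ∈ P
  /-- the root system is reduced -/
  reduced : ∀ a ∈ P, ∀ q : ℚ, q • a ∈ P → q = 1
  /-- reflections are involutions -/
  ref_invol : ∀ a ∈ P, ref a * ref a = 1
  /-- the reflection of a root `a` sends `a` to `-a` -/
  ref_neg : ∀ a ∈ P, φ (ref a) a = -a
  /-- the reflection of a root `a` is the identity modulo `a` -/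
  ref_div : ∀ a ∈ P, ∀ f : S ι, a ∣ (φ (ref a) f - f)
  /-- the reflection of a simple root is the corresponding simple reflection -/
  ref_simple : ∀ i, ref (X i) = sr i

/-- The (special/opposite, twisted) Schubert class `σ_w = Y_{R(w⁻¹)} • [w₀]` attached to a
choice `R` of reduced words. -/
def sigma (φ : W →* (S ι ≃ₐ[ℚ] S ι)) (sr : ι → W) (P : Finset (S ι)) (w0 : W)
    (R : W → List ι) (w : W) : W → Q ι :=
  heckeWord φ sr (R w⁻¹) (fixedPt φ P w0)

end RootCtx

/-!
The sum `⟨A, z⟩ := Σ_y A(y) z(y) / y(x_Π)` is the localization pairing, and each Hecke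
operator `Y_i` is self-adjoint for it: reindexing the sum by `y ↦ y s_i` swaps the two
terms of `Y_i`, while both `y(α_i)` and `y(x_Π)` change sign. Moving the operators of
`Y_I` across the pairing one at a time reverses the word, and `⟨[u], z⟩ = z(u)`.
-/

namespace RootCtx

open MvPolynomial

section

variable {ι : Type} {W : Type} [Group W]

theorem heckeWord_append (φ : W →* (S ι ≃ₐ[ℚ] S ι)) (sr : ι → W) (l₁ l₂ : List ι)
    (z : W → Q ι) :
    heckeWord φ sr (l₁ ++ l₂) z = heckeWord φ sr l₁ (heckeWord φ sr l₂ z) :=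
  List.foldr_append ..

theorem neg_X_not_mem {P : Finset (S ι)} (reduced : ∀ a ∈ P, ∀ q : ℚ, q • a ∈ P → q = 1)
    {i : ι} (hi : X i ∈ P) : -(X i : S ι) ∉ P := fun h => by
  have := reduced (X i) hi (-1) (by simpa using h)
  norm_num at this

theorem apply_apply_of_mul_self_eq_one (φ : W →* (S ι ≃ₐ[ℚ] S ι)) {s : W} (hs : s * s = 1)
    (f : S ι) : φ s (φ s f) = f := by
  rw [← AlgEquiv.mul_apply, ← map_mul, hs, map_one, AlgEquiv.one_apply]

theorem map_xPi_of_simple (φ : W →* (S ι ≃ₐ[ℚ] S ι)) {P : Finset (S ι)} {s : W} {i : ι}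
    (hs : s * s = 1) (hi : X i ∈ P) (hneg : φ s (X i) = -X i)
    (hperm : ∀ a ∈ P, a ≠ X i → φ s a ∈ P)
    (reduced : ∀ a ∈ P, ∀ q : ℚ, q • a ∈ P → q = 1) :
    φ s (xPi P) = -xPi P := by
  have hmaps : ∀ a ∈ P.erase (X i), φ s a ∈ P.erase (X i) := by
    intro a ha
    rw [Finset.mem_erase] at ha ⊢
    refine ⟨fun h => neg_X_not_mem reduced hi ?_, hperm a ha.2 ha.1⟩
    have ha' := ha.2
    rwa [← apply_apply_of_mul_self_eq_one φ hs a, h, hneg] at ha'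
  have hrest : ∏ a ∈ P.erase (X i), φ s (-a) = ∏ a ∈ P.erase (X i), -a :=
    Finset.prod_nbij' (φ s) (φ s) hmaps hmaps
      (fun a _ => apply_apply_of_mul_self_eq_one φ hs a)
      (fun a _ => apply_apply_of_mul_self_eq_one φ hs a) (fun _ _ => map_neg _ _)
  rw [xPi, map_prod, ← Finset.mul_prod_erase P _ hi, ← Finset.mul_prod_erase P _ hi, hrest,
    map_neg, hneg, neg_neg, neg_mul, neg_neg]

theorem xPi_ne_zero {P : Finset (S ι)} (h0 : (0 : S ι) ∉ P) : xPi P ≠ 0 :=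
  Finset.prod_ne_zero_iff.mpr fun _ ha h => h0 (neg_eq_zero.mp h ▸ ha)

theorem IsRootCtx.sr_mul_self [Fintype ι] {φ : W →* (S ι ≃ₐ[ℚ] S ι)}
    {ψ : W →* RingAut (Q ι)} {sr : ι → W} {ref : S ι → W} {P : Finset (S ι)}
    (hctx : IsRootCtx φ ψ sr ref P) (i : ι) :
    sr i * sr i = 1 :=
  hctx.ref_simple i ▸ hctx.ref_invol (X i) (hctx.simple_mem i)

theorem IsRootCtx.map_sr_xPi [Fintype ι] {φ : W →* (S ι ≃ₐ[ℚ] S ι)} {ψ : W →* RingAut (Q ι)}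
    {sr : ι → W} {ref : S ι → W} {P : Finset (S ι)} (hctx : IsRootCtx φ ψ sr ref P) (i : ι) :
    φ (sr i) (xPi P) = -xPi P :=
  map_xPi_of_simple φ (hctx.sr_mul_self i) (hctx.simple_mem i) (hctx.simple_neg i)
    (hctx.simple_perm i) hctx.reduced

variable [Fintype W]

theorem sum_hecke_mul_div_eq_sum_mul_hecke_div (φ : W →* (S ι ≃ₐ[ℚ] S ι)) (sr : ι → W)
    {i : ι} {x : S ι} (hs : sr i * sr i = 1) (hneg : φ (sr i) (X i) = -X i)
    (hx : φ (sr i) x = -x) (A z : W → Q ι) :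
    ∑ y, hecke φ sr i A y * z y / algebraMap (S ι) (Q ι) (φ y x)
      = ∑ y, A y * hecke φ sr i z y / algebraMap (S ι) (Q ι) (φ y x) := by
  set c : W → Q ι := fun y => algebraMap (S ι) (Q ι) (φ y (X i) * φ y x) with hc
  have hc_mul : ∀ y, c (y * sr i) = c y := fun y => by
    simp only [hc, map_mul, AlgEquiv.mul_apply, hneg, hx, map_neg, neg_mul_neg]
  have hl : ∀ y, hecke φ sr i A y * z y / algebraMap (S ι) (Q ι) (φ y x)
      = A (y * sr i) * z y / c y - A y * z y / c y := fun y => by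
    simp only [hecke, hc]
    rw [map_mul, div_mul_eq_mul_div, div_div, sub_mul, sub_div]
  have hr : ∀ y, A y * hecke φ sr i z y / algebraMap (S ι) (Q ι) (φ y x)
      = A y * z (y * sr i) / c y - A y * z y / c y := fun y => by
    simp only [hecke, hc]
    rw [map_mul, mul_div_assoc', div_div, mul_sub, sub_div]
  simp only [hl, hr, Finset.sum_sub_distrib]
  congr 1
  refine Fintype.sum_equiv (Equiv.mulRight (sr i)) _ _ fun y => ?_
  rw [Equiv.coe_mulRight, mul_assoc, hs, mul_one, hc_mul]

theorem sum_fixedPt_mul_div (φ : W →* (S ι ≃ₐ[ℚ] S ι)) {P : Finset (S ι)}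
    (h0 : (0 : S ι) ∉ P) (u : W) (z : W → Q ι) :
    ∑ y, fixedPt φ P u y * z y / algebraMap (S ι) (Q ι) (φ y (xPi P)) = z u := by
  have hne : algebraMap (S ι) (Q ι) (φ u (xPi P)) ≠ 0 := by
    rw [map_ne_zero_iff _ (IsFractionRing.injective (S ι) (Q ι)),
      map_ne_zero_iff _ (φ u).injective]
    exact xPi_ne_zero h0
  rw [Fintype.sum_eq_single u fun y hy => by simp [fixedPt, hy], fixedPt, if_pos rfl,
    mul_div_right_comm, div_self hne, one_mul]

theorem IsRootCtx.sum_heckeWord_fixedPt_mul_div [Fintype ι] {φ : W →* (S ι ≃ₐ[ℚ] S ι)}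
    {ψ : W →* RingAut (Q ι)} {sr : ι → W} {ref : S ι → W} {P : Finset (S ι)}
    (hctx : IsRootCtx φ ψ sr ref P) (u : W) (l : List ι) (z : W → Q ι) :
    ∑ y, heckeWord φ sr l (fixedPt φ P u) y * z y / algebraMap (S ι) (Q ι) (φ y (xPi P))
      = heckeWord φ sr l.reverse z u := by
  induction l generalizing z with
  | nil => exact sum_fixedPt_mul_div φ hctx.zero_not_mem u z
  | cons i t ih =>
    rw [heckeWord, List.foldr_cons, ← heckeWord,
      sum_hecke_mul_div_eq_sum_mul_hecke_div φ sr (hctx.sr_mul_self i) (hctx.simple_neg i)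
        (hctx.map_sr_xPi i),
      ih, List.reverse_cons, heckeWord_append]
    rfl

end

theorem stmt6_general {ι : Type} [Fintype ι] {W : Type} [Group W] [Fintype W]
    (φ : W →* (S ι ≃ₐ[ℚ] S ι)) (ψ : W →* RingAut (Q ι))
    (sr : ι → W) (ref : S ι → W) (P : Finset (S ι))
    (hctx : IsRootCtx φ ψ sr ref P)
    (z : W → S ι)
    (u : W) (l : List ι) :
    ∑ y : W, heckeWord φ sr l (fixedPt φ P u) y *
        algebraMap (S ι) (Q ι) (z y) / algebraMap (S ι) (Q ι) (φ y (xPi P))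
      = heckeWord φ sr l.reverse (fun y => algebraMap (S ι) (Q ι) (z y)) u :=
  hctx.sum_heckeWord_fixedPt_mul_div u l _

/-- Let `z ∈ Z` (the structure algebra), `u, w ∈ W`, `I` a reduced word
of `w⁻¹` and `I*` its reverse (a reduced word of `w`).  Then
`Σ_{y∈W} (Y_I • [u])(y)·z(y)/y(x_Π) = (Y_{I*} • z)(u)`; i.e.
`π • (ζ(u)_I · z) = (Y_{I*} • z)(u) · 𝟏`. -/
theorem stmt6 {ι : Type} [Fintype ι] {W : Type} [Group W] [Fintype W]
    (φ : W →* (S ι ≃ₐ[ℚ] S ι)) (ψ : W →* RingAut (Q ι))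
    (sr : ι → W) (ref : S ι → W) (P : Finset (S ι))
    (hctx : IsRootCtx φ ψ sr ref P)
    (z : W → S ι) (hz : inZ ref P z)
    (u w : W) (l : List ι) (hl : IsRed φ P sr l w⁻¹) :
    ∑ y : W, heckeWord φ sr l (fixedPt φ P u) y *
        algebraMap (S ι) (Q ι) (z y) / algebraMap (S ι) (Q ι) (φ y (xPi P))
      = heckeWord φ sr l.reverse (fun y => algebraMap (S ι) (Q ι) (z y)) u :=
  stmt6_general φ ψ sr ref P hctx z u l

end RootCtx
end
end

section
/- For all u, w, v ∈ W with ℓ(w) + ℓ(v) < ℓ(u), any reduced word P of w and any reduced word Q of v⁻¹: (Y_P • (Y_Q • [u]))(e) = 0. -/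
open scoped Classical

noncomputable section

/-!
`Y_i • z` at `v` only involves the values of `z` at `v` and `v s_i`, so `(Y_I • z)(v)` vanishes
as soon as `z` vanishes at every `v s_{j₁} ⋯ s_{j_k}` with `(j₁, …, j_k)` a subword of `I`.
For `z = [u]` and `v = e` the only value that counts is at `u`, and `u` is the product of a
subword of the concatenation `PQ` of the two words. Since multiplying by a simple reflection
changes the number of inversions by at most one, such a product has length at most
`ℓ(w) + ℓ(v⁻¹) = ℓ(w) + ℓ(v) < ℓ(u)`, so it is never `u`.
-/

namespace RootCtx

open MvPolynomial

variable {ι : Type} {W : Type} [Group W] {φ : W →* (S ι ≃ₐ[ℚ] S ι)} {sr : ι → W}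

theorem heckeWord_apply_eq_zero_of_forall_sublist {l : List ι} {z : W → Q ι} {v : W}
    (hz : ∀ m, List.Sublist m l → z (v * (m.map sr).prod) = 0) : heckeWord φ sr l z v = 0 := by
  induction l generalizing v with
  | nil => simpa [heckeWord] using hz [] .slnil
  | cons i l ih =>
    have hvs : heckeWord φ sr l z (v * sr i) = 0 :=
      ih fun m hm => by simpa [mul_assoc] using hz (i :: m) (hm.cons_cons i)
    have hv : heckeWord φ sr l z v = 0 := ih fun m hm => hz m (hm.cons i)
    change (heckeWord φ sr l z (v * sr i) - heckeWord φ sr l z v) / _ = 0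
    rw [hvs, hv, sub_self, zero_div]

variable {P : Finset (S ι)}

theorem len_eq_card_filter (w : W) : len φ P w = (P.filter fun a => -(φ w a) ∈ P).card := by
  rw [len, ← Set.ncard_coe_finset]
  congr 1
  ext a
  simp

theorem len_inv_le (w : W) : len φ P w⁻¹ ≤ len φ P w := by
  rw [len_eq_card_filter, len_eq_card_filter]
  refine Finset.card_le_card_of_injOn (fun a => -(φ w⁻¹ a)) (fun a ha => ?_)
    (fun a _ b _ hab => (φ w⁻¹).injective (neg_injective hab))
  obtain ⟨haP, hna⟩ := Finset.mem_filter.1 ha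
  refine Finset.mem_filter.2 ⟨hna, ?_⟩
  simpa using haP

theorem len_inv (w : W) : len φ P w⁻¹ = len φ P w :=
  (len_inv_le w).antisymm (by simpa using len_inv_le (φ := φ) (P := P) w⁻¹)

variable [Fintype ι] {ψ : W →* RingAut (Q ι)} {ref : S ι → W}

theorem IsRootCtx.neg_notMem (hctx : IsRootCtx φ ψ sr ref P) {a : S ι} (ha : a ∈ P) :
    -a ∉ P := fun hna => by
  have := hctx.reduced a ha (-1) (by rwa [neg_one_smul])
  norm_num at this

theorem IsRootCtx.len_one (hctx : IsRootCtx φ ψ sr ref P) : len φ P 1 = 0 := by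
  simpa [len_eq_card_filter, Finset.filter_eq_empty_iff] using fun a ha => hctx.neg_notMem ha

theorem IsRootCtx.len_mul_simple_le (hctx : IsRootCtx φ ψ sr ref P) (x : W) (i : ι) :
    len φ P (x * sr i) ≤ len φ P x + 1 := by
  rw [len_eq_card_filter, len_eq_card_filter]
  set F := P.filter fun a => -(φ (x * sr i) a) ∈ P
  have hmaps : ∀ a ∈ F \ {X i}, φ (sr i) a ∈ P.filter fun a => -(φ x a) ∈ P := by
    intro a ha
    obtain ⟨haF, hne⟩ := Finset.mem_sdiff.1 ha
    obtain ⟨haP, hneg⟩ := Finset.mem_filter.1 haF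
    refine Finset.mem_filter.2 ⟨hctx.simple_perm i a haP (Finset.notMem_singleton.1 hne), ?_⟩
    rwa [map_mul, AlgEquiv.mul_apply] at hneg
  calc F.card ≤ (F \ {X i}).card + ({X i} : Finset (S ι)).card :=
        Finset.card_le_card_sdiff_add_card
    _ ≤ _ := by
      rw [Finset.card_singleton]
      exact add_le_add_left (Finset.card_le_card_of_injOn _ hmaps (φ (sr i)).injective.injOn) 1

theorem IsRootCtx.len_list_prod_le (hctx : IsRootCtx φ ψ sr ref P) (m : List ι) :
    len φ P (m.map sr).prod ≤ m.length := by
  induction m using List.reverseRecOn with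
  | nil => simp [hctx.len_one]
  | append_singleton l i ih =>
    simpa using (hctx.len_mul_simple_le (l.map sr).prod i).trans (by omega)

theorem stmt12_general {ι : Type} [Fintype ι] {W : Type} [Group W]
    (φ : W →* (S ι ≃ₐ[ℚ] S ι)) (ψ : W →* RingAut (Q ι))
    (sr : ι → W) (ref : S ι → W) (P : Finset (S ι))
    (hctx : IsRootCtx φ ψ sr ref P)
    (u w v : W) (h : len φ P w + len φ P v < len φ P u)
    (lP lQ : List ι)
    (hP : IsRed φ P sr lP w) (hQ : IsRed φ P sr lQ v⁻¹) :
    heckeWord φ sr lP (heckeWord φ sr lQ (fixedPt φ P u)) 1 = 0 := by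
  refine heckeWord_apply_eq_zero_of_forall_sublist fun m₁ hm₁ => ?_
  refine heckeWord_apply_eq_zero_of_forall_sublist fun m₂ hm₂ => if_neg fun hu => h.not_ge ?_
  calc len φ P u = len φ P ((m₁ ++ m₂).map sr).prod := by
        rw [← hu, List.map_append, List.prod_append, one_mul]
    _ ≤ m₁.length + m₂.length := (hctx.len_list_prod_le _).trans_eq List.length_append
    _ ≤ lP.length + lQ.length := add_le_add hm₁.length_le hm₂.length_le
    _ = len φ P w + len φ P v := by rw [hP.2, hQ.2, len_inv]

/-- For all `u, w, v ∈ W` with `ℓ(w) + ℓ(v) < ℓ(u)`, any reduced word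
`P` of `w` and any reduced word `Q` of `v⁻¹`: `(Y_P • (Y_Q • [u]))(e) = 0`. -/
theorem stmt12 {ι : Type} [Fintype ι] {W : Type} [Group W] [Fintype W]
    (φ : W →* (S ι ≃ₐ[ℚ] S ι)) (ψ : W →* RingAut (Q ι))
    (sr : ι → W) (ref : S ι → W) (P : Finset (S ι))
    (hctx : IsRootCtx φ ψ sr ref P)
    (u w v : W) (h : len φ P w + len φ P v < len φ P u)
    (lP lQ : List ι)
    (hP : IsRed φ P sr lP w) (hQ : IsRed φ P sr lQ v⁻¹) :
    heckeWord φ sr lP (heckeWord φ sr lQ (fixedPt φ P u)) 1 = 0 :=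
  stmt12_general φ ψ sr ref P hctx u w v h lP lQ hP hQ

end RootCtx
end
end
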